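/- arXiv:2102.11887 — 2 statements merged into one kernel-verified Lean document; each statement's English description precedes it below -/
import Mathlib

section
/- For density matrices ρ and σ with supp(ρ) ⊆ supp(σ), the quantum cross entropy satisfies S(ρ,σ) = -tr(ρ log σ) ≥ -log tr(ρσ). -/
open Matrix BigOperators Finset
open scoped ComplexOrder

noncomputable def matLog {n : Type*} [Fintype n] [DecidableEq n] (A : Matrix n n ℂ) : Matrix n n ℂ :=
  if hA : A.IsHermitian then hA.cfc Real.log else 0

noncomputable def qCE {n : Type*} [Fintype n] [DecidableEq n] (ρ σ : Matrix n n ℂ) : ℝ :=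
  -(ρ * matLog σ).trace.re

def IsDensityMatrix {n : Type*} [Fintype n] [DecidableEq n] (ρ : Matrix n n ℂ) : Prop :=
  ρ.PosSemidef ∧ ρ.trace = 1

/-- The support of `ρ` is contained in the support of `σ`, phrased (for positive
semidefinite matrices, equivalently) as inclusion of kernels the other way. -/
def SuppSubseteq {n : Type*} [Fintype n] [DecidableEq n] (ρ σ : Matrix n n ℂ) : Prop :=
  ∀ v : n → ℂ, σ *ᵥ v = 0 → ρ *ᵥ v = 0

/-!
Diagonalise `σ = ∑ⱼ λⱼ vⱼ vⱼ*` and put `qⱼ = ⟨vⱼ, ρ vⱼ⟩`, a probability vector. Then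
`tr(ρ log σ) = ∑ⱼ qⱼ log λⱼ` and `tr(ρσ) = ∑ⱼ qⱼ λⱼ`, so the claim is Jensen's inequality for the
concave logarithm. The support condition makes `λⱼ > 0` wherever `qⱼ > 0`.
-/

theorem Real.sum_mul_log_le_log_sum_mul {ι : Type*} (s : Finset ι) (w z : ι → ℝ)
    (hw : ∀ i ∈ s, 0 ≤ w i) (hw_sum : ∑ i ∈ s, w i = 1) (hz : ∀ i ∈ s, w i ≠ 0 → 0 < z i) :
    ∑ i ∈ s, w i * Real.log (z i) ≤ Real.log (∑ i ∈ s, w i * z i) := by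
  classical
  have hfilter {f : ι → ℝ} : ∑ i ∈ s with w i ≠ 0, w i * f i = ∑ i ∈ s, w i * f i :=
    sum_filter_of_ne fun _ _ h ↦ left_ne_zero_of_mul h
  have jensen := strictConcaveOn_log_Ioi.concaveOn.le_map_sum (t := s.filter (w · ≠ 0))
    (fun i hi ↦ hw i (mem_filter.1 hi).1) (by rwa [sum_filter_ne_zero])
    (fun i hi ↦ hz i (mem_filter.1 hi).1 (mem_filter.1 hi).2)
  simpa only [smul_eq_mul, hfilter] using jensen

namespace Matrix.IsHermitian

variable {𝕜 n : Type*} [RCLike 𝕜] [Fintype n] [DecidableEq n] {A : Matrix n n 𝕜}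

theorem trace_mul_cfc (hA : A.IsHermitian) (B : Matrix n n 𝕜) (f : ℝ → ℝ) :
    (B * hA.cfc f).trace = ∑ j, (star ⇑(hA.eigenvectorBasis j) ⬝ᵥ B *ᵥ ⇑(hA.eigenvectorBasis j))
      * f (hA.eigenvalues j) := by
  set U : Matrix n n 𝕜 := (hA.eigenvectorUnitary : Matrix n n 𝕜)
  have hcycle : (B * hA.cfc f).trace =
      (star U * B * U * diagonal (RCLike.ofReal ∘ f ∘ hA.eigenvalues)).trace := by
    rw [IsHermitian.cfc, Unitary.conjStarAlgAut_apply, ← Matrix.mul_assoc, ← Matrix.mul_assoc,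
      trace_mul_comm, ← Matrix.mul_assoc, ← Matrix.mul_assoc]
  rw [hcycle, trace]
  refine sum_congr rfl fun j _ ↦ ?_
  rw [diag_apply, mul_diagonal, mul_mul_apply]
  rfl

theorem re_trace_mul_cfc (hA : A.IsHermitian) (B : Matrix n n 𝕜) (f : ℝ → ℝ) :
    RCLike.re (B * hA.cfc f).trace =
      ∑ j, RCLike.re (star ⇑(hA.eigenvectorBasis j) ⬝ᵥ B *ᵥ ⇑(hA.eigenvectorBasis j))
        * f (hA.eigenvalues j) := by
  simp only [trace_mul_cfc, map_sum, RCLike.re_mul_ofReal]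

theorem cfc_id_eq (hA : A.IsHermitian) : hA.cfc id = A := by
  rw [← hA.cfc_eq, cfc_id ℝ A hA.isSelfAdjoint]

theorem sum_dotProduct_eigenvectorBasis (hA : A.IsHermitian) (B : Matrix n n 𝕜) :
    ∑ j, star ⇑(hA.eigenvectorBasis j) ⬝ᵥ B *ᵥ ⇑(hA.eigenvectorBasis j) = B.trace := by
  have hone : hA.cfc (fun _ ↦ 1) = 1 := by
    rw [← hA.cfc_eq, cfc_const_one ℝ A hA.isSelfAdjoint]
  simpa [hone] using (hA.trace_mul_cfc B fun _ ↦ 1).symm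

end Matrix.IsHermitian

theorem stmt10 {n : Type*} [Fintype n] [DecidableEq n] (ρ σ : Matrix n n ℂ)
    (hρ : IsDensityMatrix ρ) (hσ : IsDensityMatrix σ) (hsupp : SuppSubseteq ρ σ) :
    qCE ρ σ ≥ -Real.log ((ρ * σ).trace.re) := by
  obtain ⟨hρ_psd, hρ_tr⟩ := hρ
  have hσH : σ.IsHermitian := hσ.1.1
  set q : n → ℝ := fun j ↦ (star ⇑(hσH.eigenvectorBasis j) ⬝ᵥ ρ *ᵥ ⇑(hσH.eigenvectorBasis j)).re
  have hq_nonneg (j : n) : 0 ≤ q j := hρ_psd.re_dotProduct_nonneg _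
  have hq_sum : ∑ j, q j = 1 := by
    simp only [q, ← Complex.re_sum, hσH.sum_dotProduct_eigenvectorBasis, hρ_tr, Complex.one_re]
  have hq_supp (j : n) (hj : q j ≠ 0) : 0 < hσH.eigenvalues j := by
    refine (hσ.1.eigenvalues_nonneg j).lt_of_ne fun h0 ↦ hj ?_
    have hker : σ *ᵥ ⇑(hσH.eigenvectorBasis j) = 0 := by
      rw [hσH.mulVec_eigenvectorBasis, ← h0, zero_smul]
    simp [q, hsupp _ hker]
  have hlog : (ρ * matLog σ).trace.re = ∑ j, q j * Real.log (hσH.eigenvalues j) := by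
    rw [matLog, dif_pos hσH]
    exact hσH.re_trace_mul_cfc ρ Real.log
  have hlin : (ρ * σ).trace.re = ∑ j, q j * hσH.eigenvalues j := by
    have h := hσH.re_trace_mul_cfc ρ id
    rw [hσH.cfc_id_eq] at h
    exact h
  rw [ge_iff_le, qCE, hlog, hlin, neg_le_neg_iff]
  exact Real.sum_mul_log_le_log_sum_mul univ q _ (fun j _ ↦ hq_nonneg j) hq_sum
    fun j _ ↦ hq_supp j
end

section
/- Let σ be a density matrix and Π an orthogonal projector with rank(ΠσΠ) = 1. Then [ΠσΠ, σ] = 0 if and only if [Π, σ] = 0. -/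
/-!
Write `σ = Bᴴ B`. Commutation of `PσP` with `σ` gives `(PσP) σ P = (PσP) σ`, i.e. `X Xᴴ X Y = 0` for
`X = P Bᴴ` and `Y = B - B P`. Two applications of `Aᴴ A C = 0 → A C = 0` then give `X Y = 0`, i.e.
`PσP = Pσ`, and taking adjoints `σP = PσP` as well.
-/

open Matrix
open scoped ComplexOrder

section Semigroup

variable {R : Type*} [Semigroup R] {p a : R}

theorem IsIdempotentElem.mul_mul_mul_mul_mul_eq_of_commute (hp : IsIdempotentElem p)
    (h : Commute (p * a * p) a) : p * a * p * a * p = p * a * p * a :=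
  calc p * a * p * a * p = p * (a * (p * a * p)) := by simp only [mul_assoc]
    _ = p * (p * a * p * a) := by rw [h.eq]
    _ = p * a * p * a := by simp only [← mul_assoc, hp.eq]

theorem commute_of_mul_mul_self_eq [StarMul R] (hp : IsSelfAdjoint p) (ha : IsSelfAdjoint a)
    (h : p * a * p = p * a) : Commute p a := by
  have hstar := congrArg star h
  simp only [star_mul, hp.star_eq, ha.star_eq, ← mul_assoc] at hstar
  exact h.symm.trans hstar

end Semigroup

namespace Matrix

variable {m n p 𝕜 : Type*} [Fintype m] [Fintype n] [RCLike 𝕜]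

theorem mul_eq_zero_of_mul_conjTranspose_mul_mul_eq_zero {X : Matrix m n 𝕜} {Y : Matrix n p 𝕜}
    (h : X * Xᴴ * X * Y = 0) : X * Y = 0 := by
  rw [Matrix.mul_assoc, self_mul_conjTranspose_mul_eq_zero, ← Matrix.mul_assoc,
    conjTranspose_mul_self_mul_eq_zero] at h
  exact h

open scoped MatrixOrder in
theorem PosSemidef.exists_eq_conjTranspose_mul_self {A : Matrix n n 𝕜} (hA : A.PosSemidef) :
    ∃ B : Matrix n n 𝕜, A = Bᴴ * B := by
  classical
  exact ⟨CFC.sqrt A, by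
    rw [(CFC.sqrt_nonneg A).posSemidef.isHermitian.eq, CFC.sqrt_mul_sqrt_self A hA.nonneg]⟩

theorem PosSemidef.mul_mul_self_eq_of_mul_mul_mul_mul_mul_eq {P σ : Matrix n n 𝕜}
    (hσ : σ.PosSemidef) (hP : P.IsHermitian) (hPP : IsIdempotentElem P)
    (h : P * σ * P * σ * P = P * σ * P * σ) : P * σ * P = P * σ := by
  obtain ⟨B, hB⟩ := hσ.exists_eq_conjTranspose_mul_self
  have hPP' (A : Matrix n n 𝕜) : P * (P * A) = P * A := by rw [← Matrix.mul_assoc, hPP.eq]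
  set X := P * Bᴴ
  set Y := B - B * P
  have hXXXY : X * Xᴴ * X * Y = P * σ * P * σ - P * σ * P * σ * P := by
    simp only [X, Y, conjTranspose_mul, conjTranspose_conjTranspose, hP.eq, hB, Matrix.mul_sub,
      Matrix.mul_assoc, hPP']
  have hXY : X * Y = P * σ - P * σ * P := by
    simp only [X, Y, hB, Matrix.mul_sub, Matrix.mul_assoc]
  rw [eq_comm, ← sub_eq_zero, ← hXY]
  exact mul_eq_zero_of_mul_conjTranspose_mul_mul_eq_zero (by rw [hXXXY, h, sub_self])

theorem commute_mul_mul_self_iff_commute {P σ : Matrix n n 𝕜} (hP : P.IsHermitian)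
    (hPP : IsIdempotentElem P) (hσ : σ.PosSemidef) :
    Commute (P * σ * P) σ ↔ Commute P σ := by
  refine ⟨fun h => ?_, fun h => (h.mul_left (Commute.refl σ)).mul_left h⟩
  refine commute_of_mul_mul_self_eq hP.isSelfAdjoint hσ.isHermitian.isSelfAdjoint ?_
  exact hσ.mul_mul_self_eq_of_mul_mul_mul_mul_mul_eq hP hPP
    (hPP.mul_mul_mul_mul_mul_eq_of_commute h)

end Matrix

theorem stmt18_general {n : Type*} [Fintype n] (Pr σ : Matrix n n ℂ)
    (hPrherm : Pr.IsHermitian) (hPrproj : Pr * Pr = Pr)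
    (hσ : σ.PosSemidef) :
    (Pr * σ * Pr) * σ = σ * (Pr * σ * Pr) ↔ Pr * σ = σ * Pr :=
  commute_mul_mul_self_iff_commute hPrherm hPrproj hσ

theorem stmt18 {n : Type*} [Fintype n] [DecidableEq n] (Pr σ : Matrix n n ℂ)
    (hPrherm : Pr.IsHermitian) (hPrproj : Pr * Pr = Pr)
    (hσ : σ.PosSemidef) (hσ1 : σ.trace = 1)
    (hrank : (Pr * σ * Pr).rank = 1) :
    (Pr * σ * Pr) * σ = σ * (Pr * σ * Pr) ↔ Pr * σ = σ * Pr :=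
  stmt18_general Pr σ hPrherm hPrproj hσ
end
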